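/- Let P be the 4-outcome rank-1 projective measurement on C²⊗C² with projectors onto |00⟩, |11⟩, (|01⟩+|10⟩)/√2, (|01⟩−|10⟩)/√2. Then for any separable POVM (F^j)_{j=1}^4, (1/4)Σ_j Tr(F^j P^j) ≤ 3/4. -/

import Mathlib

open Matrix ComplexOrder

noncomputable section

def IsSeparableOp (F : Matrix (Fin 2 × Fin 2) (Fin 2 × Fin 2) ℂ) : Prop :=
  ∃ (K : ℕ) (lam : Fin K → ℝ) (u : Fin K → Fin 2 → ℂ) (v : Fin K → Fin 2 → ℂ),
    (∀ k, 0 ≤ lam k) ∧ (∀ k, ∑ i, ‖u k i‖ ^ 2 = 1) ∧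
    (∀ k, ∑ i, ‖v k i‖ ^ 2 = 1) ∧
    F = ∑ k, (lam k : ℂ) •
      Matrix.vecMulVec (fun p => u k p.1 * v k p.2) (star fun p => u k p.1 * v k p.2)

def IsSeparablePOVM {d : ℕ} (F : Fin d → Matrix (Fin 2 × Fin 2) (Fin 2 × Fin 2) ℂ) : Prop :=
  (∀ j, IsSeparableOp (F j)) ∧ ∑ j, F j = 1

def ket (i j : Fin 2) : Fin 2 × Fin 2 → ℂ := fun p => if p = (i, j) then 1 else 0

/-- The eigenstates |00⟩, |11⟩, ψ⁺, ψ⁻ of the mixed product/entangled measurement. -/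
def mixedVec : Fin 4 → Fin 2 × Fin 2 → ℂ
  | 0 => ket 0 0
  | 1 => ket 1 1
  | 2 => ((Real.sqrt 2)⁻¹ : ℂ) • (ket 0 1 + ket 1 0)
  | 3 => ((Real.sqrt 2)⁻¹ : ℂ) • (ket 0 1 - ket 1 0)

def mixedProj (j : Fin 4) : Matrix (Fin 2 × Fin 2) (Fin 2 × Fin 2) ℂ :=
  Matrix.vecMulVec (mixedVec j) (star (mixedVec j))

/-!
Write a separable `F` as `∑ₖ λₖ |uₖ ⊗ vₖ⟩⟨uₖ ⊗ vₖ|`. Then `Tr (F Pⱼ) = ∑ₖ λₖ |⟨ψⱼ|uₖ ⊗ vₖ⟩|²`,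
and the overlap of `ψⱼ` with a product state is at most the square `sⱼ = mixedSchmidtSq j`
of its largest Schmidt coefficient: `1` for `|00⟩, |11⟩` and `1/2` for `ψ±`. Hence
`gⱼ := Tr (Fⱼ Pⱼ) ≤ sⱼ Tr Fⱼ`, while also `gⱼ ≤ ∑ᵢ Tr (Fᵢ Pⱼ) = Tr Pⱼ = 1`. Since
`∑ⱼ Tr Fⱼ = Tr 1 = 4`, `∑ⱼ gⱼ ≤ g₀ + g₁ + (4 - Tr F₀ - Tr F₁) / 2 ≤ 2 + (g₀ + g₁) / 2 ≤ 3`.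
-/

section

variable {n : Type*} [Fintype n]

lemma trace_vecMulVec_star_mul_vecMulVec_star (w ψ : n → ℂ) :
    (vecMulVec w (star w) * vecMulVec ψ (star ψ)).trace = Complex.normSq (star ψ ⬝ᵥ w) := by
  rw [vecMulVec_mul_vecMulVec, trace_vecMulVec, dotProduct_smul, smul_eq_mul,
    star_dotProduct, dotProduct_comm w, Complex.normSq_eq_conj_mul_self]
  rfl

lemma re_trace_vecMulVec_star (w : n → ℂ) :
    (vecMulVec w (star w)).trace.re = ∑ p, ‖w p‖ ^ 2 := by
  simp [dotProduct, Complex.mul_conj, Complex.sq_norm]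

lemma sum_trace_mul_of_sum_eq_one {ι : Type*} [Fintype ι] [DecidableEq n]
    {F : ι → Matrix n n ℂ} (hF : ∑ j, F j = 1) (A : Matrix n n ℂ) :
    ∑ j, (F j * A).trace = A.trace := by
  rw [← trace_sum, ← Finset.sum_mul, hF, one_mul]

end

lemma sum_norm_sq_tensor {ι κ : Type*} [Fintype ι] [Fintype κ] (u : ι → ℂ) (v : κ → ℂ) :
    ∑ p : ι × κ, ‖u p.1 * v p.2‖ ^ 2 = (∑ i, ‖u i‖ ^ 2) * ∑ j, ‖v j‖ ^ 2 := by
  simp only [norm_mul, mul_pow, Fintype.sum_prod_type, Finset.sum_mul_sum]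

lemma normSq_mul_add_mul_le (a b c d : ℂ) :
    Complex.normSq (a * c + b * d)
      ≤ (Complex.normSq a + Complex.normSq b) * (Complex.normSq c + Complex.normSq d) := by
  have lagrange : (Complex.normSq a + Complex.normSq b) * (Complex.normSq c + Complex.normSq d)
      = Complex.normSq (a * c + b * d)
        + Complex.normSq (a * (starRingEnd ℂ) d - b * (starRingEnd ℂ) c) := by
    simp only [Complex.normSq_apply, Complex.add_re, Complex.add_im, Complex.sub_re,
      Complex.sub_im, Complex.mul_re, Complex.mul_im, Complex.conj_re, Complex.conj_im]
    ring
  linarith [Complex.normSq_nonneg (a * (starRingEnd ℂ) d - b * (starRingEnd ℂ) c)]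

namespace IsSeparableOp

variable {F : Matrix (Fin 2 × Fin 2) (Fin 2 × Fin 2) ℂ}

lemma re_trace_mul_proj_nonneg (hF : IsSeparableOp F) (ψ : Fin 2 × Fin 2 → ℂ) :
    0 ≤ (F * vecMulVec ψ (star ψ)).trace.re := by
  obtain ⟨K, lam, u, v, hlam, -, -, rfl⟩ := hF
  simp only [Finset.sum_mul, smul_mul, trace_sum, trace_smul,
    trace_vecMulVec_star_mul_vecMulVec_star, Complex.re_sum, smul_eq_mul,
    ← Complex.ofReal_mul, Complex.ofReal_re]
  exact Finset.sum_nonneg fun k _ => mul_nonneg (hlam k) (Complex.normSq_nonneg _)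

lemma re_trace_mul_proj_le (hF : IsSeparableOp F) (ψ : Fin 2 × Fin 2 → ℂ) {c : ℝ}
    (hc : ∀ u v : Fin 2 → ℂ, ∑ i, ‖u i‖ ^ 2 = 1 → ∑ i, ‖v i‖ ^ 2 = 1 →
      Complex.normSq (star ψ ⬝ᵥ fun p => u p.1 * v p.2) ≤ c) :
    (F * vecMulVec ψ (star ψ)).trace.re ≤ c * F.trace.re := by
  obtain ⟨K, lam, u, v, hlam, hu, hv, rfl⟩ := hF
  simp only [Finset.sum_mul, smul_mul, trace_sum, trace_smul,
    trace_vecMulVec_star_mul_vecMulVec_star, Complex.re_sum, smul_eq_mul,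
    ← Complex.ofReal_mul, Complex.ofReal_re, Complex.re_ofReal_mul, re_trace_vecMulVec_star,
    sum_norm_sq_tensor, hu, hv, mul_one, Finset.mul_sum]
  exact Finset.sum_le_sum fun k _ => by nlinarith [hlam k, hc (u k) (v k) (hu k) (hv k)]

end IsSeparableOp

lemma IsSeparablePOVM.re_trace_mul_proj_le {d : ℕ}
    {F : Fin d → Matrix (Fin 2 × Fin 2) (Fin 2 × Fin 2) ℂ} (hF : IsSeparablePOVM F)
    (ψ : Fin 2 × Fin 2 → ℂ) (j : Fin d) :
    (F j * vecMulVec ψ (star ψ)).trace.re ≤ (vecMulVec ψ (star ψ)).trace.re := by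
  calc (F j * vecMulVec ψ (star ψ)).trace.re
      ≤ ∑ i, (F i * vecMulVec ψ (star ψ)).trace.re :=
        Finset.single_le_sum (fun i _ => (hF.1 i).re_trace_mul_proj_nonneg ψ) (Finset.mem_univ j)
    _ = (vecMulVec ψ (star ψ)).trace.re := by
        rw [← Complex.re_sum, sum_trace_mul_of_sum_eq_one hF.2]

lemma re_trace_mixedProj (j : Fin 4) : (mixedProj j).trace.re = 1 := by
  rw [mixedProj, re_trace_vecMulVec_star]
  fin_cases j <;>
    norm_num [mixedVec, ket, Fintype.sum_prod_type, mul_pow]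

lemma star_ket_dotProduct (i j : Fin 2) (w : Fin 2 × Fin 2 → ℂ) :
    star (ket i j) ⬝ᵥ w = w (i, j) := by
  simp [ket, dotProduct]

def mixedSchmidtSq : Fin 4 → ℝ := ![1, 1, 1 / 2, 1 / 2]

lemma normSq_overlap_mixedVec_le (j : Fin 4) (u v : Fin 2 → ℂ)
    (hu : ∑ i, ‖u i‖ ^ 2 = 1) (hv : ∑ i, ‖v i‖ ^ 2 = 1) :
    Complex.normSq (star (mixedVec j) ⬝ᵥ fun p => u p.1 * v p.2) ≤ mixedSchmidtSq j := by
  simp only [Fin.sum_univ_two, Complex.sq_norm] at hu hv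
  have hu0 := Complex.normSq_nonneg (u 0)
  have hu1 := Complex.normSq_nonneg (u 1)
  have hv0 := Complex.normSq_nonneg (v 0)
  have hv1 := Complex.normSq_nonneg (v 1)
  fin_cases j <;> simp only [mixedSchmidtSq]
  · calc _ = Complex.normSq (u 0) * Complex.normSq (v 0) := by simp [mixedVec, star_ket_dotProduct]
      _ ≤ 1 := by nlinarith
  · calc _ = Complex.normSq (u 1) * Complex.normSq (v 1) := by simp [mixedVec, star_ket_dotProduct]
      _ ≤ 1 := by nlinarith
  · calc _ = 2⁻¹ * Complex.normSq (u 0 * v 1 + u 1 * v 0) := by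
          simp [mixedVec, star_ket_dotProduct, add_dotProduct, ← mul_add]
      _ ≤ 1 / 2 := by nlinarith [normSq_mul_add_mul_le (u 0) (u 1) (v 1) (v 0)]
  · calc _ = 2⁻¹ * Complex.normSq (u 0 * v 1 - u 1 * v 0) := by
          simp [mixedVec, star_ket_dotProduct, sub_dotProduct]
      _ ≤ 1 / 2 := by
          have h := normSq_mul_add_mul_le (u 0) (-u 1) (v 1) (v 0)
          rw [neg_mul, ← sub_eq_add_neg, Complex.normSq_neg] at h
          nlinarith

lemma sum_le_three_of_le_mixedSchmidtSq_mul (g t : Fin 4 → ℝ)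
    (hg : ∀ j, g j ≤ mixedSchmidtSq j * t j) (hg1 : ∀ j, g j ≤ 1) (ht : ∑ j, t j = 4) :
    ∑ j, g j ≤ 3 := by
  have h0 := hg 0
  have h1 := hg 1
  have h2 := hg 2
  have h3 := hg 3
  simp only [mixedSchmidtSq, Matrix.cons_val] at h0 h1 h2 h3
  rw [Fin.sum_univ_four] at ht ⊢
  linarith [hg1 0, hg1 1]

theorem qsep_mixed_measurement_bound
    (F : Fin 4 → Matrix (Fin 2 × Fin 2) (Fin 2 × Fin 2) ℂ) (hF : IsSeparablePOVM F) :
    (1 / 4 : ℝ) * ∑ j, ((F j * mixedProj j).trace).re ≤ 3 / 4 := by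
  have htrace : ∑ j, (F j).trace.re = 4 := by
    simpa [← Complex.re_sum] using congrArg Complex.re (sum_trace_mul_of_sum_eq_one hF.2 1)
  have hsum := sum_le_three_of_le_mixedSchmidtSq_mul (fun j => (F j * mixedProj j).trace.re)
    (fun j => (F j).trace.re)
    (fun j => (hF.1 j).re_trace_mul_proj_le _ (normSq_overlap_mixedVec_le j))
    (fun j => (hF.re_trace_mul_proj_le _ j).trans_eq (re_trace_mixedProj j)) htrace
  linarith
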